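/- arXiv:1408.6116 — 7 statements merged into one kernel-verified Lean document; each statement's English description precedes it below -/
import Mathlib

section
/- Let P be the set of ordered pairs (x,y) of integers with x ≥ y ≥ 0, and let Q be the set of quadruples (v;r,s;λ) of nonnegative integers satisfying λ(v−1) = r(r−1) + s(s−1), v = 2(r+s−λ)+1, and v/2 ≥ r ≥ s ≥ 0. Then the map P → Q given by v = 1 + x(x+1) + y(y+1), r = C(x+1,2) + C(y,2), s = C(x,2) + C(y+1,2), λ = C(x,2) + C(y,2) is a bijection, where C(a,2) = a(a−1)/2 denotes the binomial coefficient. -/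
/-- The set of ordered pairs `(x, y)` of nonnegative integers with `x ≥ y ≥ 0`. -/
def pairSet : Set (ℕ × ℕ) := {p | p.2 ≤ p.1}

/-- The set of normalized feasible parameter sets `(v; r, s; λ)` for D-optimal SDSs:
quadruples of nonnegative integers with `λ(v−1) = r(r−1) + s(s−1)`,
`v = 2(r+s−λ)+1` (stated without subtraction as `v + 2λ = 2(r+s) + 1`),
and `v/2 ≥ r ≥ s ≥ 0` (stated as `2r ≤ v` and `s ≤ r`). -/
def paramSet : Set (ℕ × ℕ × ℕ × ℕ) :=
  {q | q.2.2.2 * (q.1 - 1) = q.2.1 * (q.2.1 - 1) + q.2.2.1 * (q.2.2.1 - 1) ∧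
       q.1 + 2 * q.2.2.2 = 2 * (q.2.1 + q.2.2.1) + 1 ∧
       2 * q.2.1 ≤ q.1 ∧ q.2.2.1 ≤ q.2.1}

/-- The map `(x,y) ↦ (v;r,s;λ)` given by `v = 1 + x(x+1) + y(y+1)`,
`r = C(x+1,2) + C(y,2)`, `s = C(x,2) + C(y+1,2)`, `λ = C(x,2) + C(y,2)`. -/
def paramMap (p : ℕ × ℕ) : ℕ × ℕ × ℕ × ℕ :=
  (1 + p.1 * (p.1 + 1) + p.2 * (p.2 + 1),
   (p.1 + 1).choose 2 + p.2.choose 2,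
   p.1.choose 2 + (p.2 + 1).choose 2,
   p.1.choose 2 + p.2.choose 2)

lemma c2 (n : ℕ) : 2 * ((n.choose 2 : ℤ)) = n * (n - 1) := by
  induction n with
  | zero => simp
  | succ k ih =>
    rw [Nat.choose_succ_succ]
    push_cast
    have h : (k.choose 1 : ℤ) = k := by exact_mod_cast Nat.choose_one_right k
    rw [h]
    ring_nf
    ring_nf at ih
    linarith

lemma cast_mul_pred (n : ℕ) : ((n * (n - 1) : ℕ) : ℤ) = (n : ℤ) * ((n : ℤ) - 1) := by
  cases n with
  | zero => simp
  | succ k => push_cast [Nat.succ_sub_one]; ring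

lemma chooseS (n : ℕ) : (n + 1).choose 2 = n + n.choose 2 := by
  rw [Nat.choose_succ_succ, Nat.choose_one_right]

lemma natCast_inj' {a b : ℕ} (h : (a : ℤ) = b) : a = b := by exact_mod_cast h

theorem paramMap_bijOn : Set.BijOn paramMap pairSet paramSet := by
  refine ⟨?_, ?_, ?_⟩
  · -- MapsTo
    rintro ⟨x, y⟩ hxy
    simp only [pairSet, Set.mem_setOf_eq] at hxy
    simp only [paramSet, paramMap, Set.mem_setOf_eq]
    rw [chooseS x, chooseS y,
      show 1 + x * (x + 1) + y * (y + 1) - 1 = x * (x + 1) + y * (y + 1) from by omega]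
    have hx := c2 x
    have hy := c2 y
    refine ⟨?_, ?_, ?_, ?_⟩
    · apply natCast_inj'
      rw [Nat.cast_add, cast_mul_pred, cast_mul_pred]
      push_cast
      linear_combination (1 - (x.choose 2 : ℤ) - (y.choose 2 : ℤ)) * hx +
        (1 - (x.choose 2 : ℤ) - (y.choose 2 : ℤ)) * hy
    · apply natCast_inj'
      push_cast
      linear_combination -hx - hy
    · zify
      nlinarith [hx, hy, Int.natCast_nonneg y]
    · omega
  · -- InjOn
    rintro ⟨x1, y1⟩ h1 ⟨x2, y2⟩ h2 heq
    simp only [paramMap, Prod.mk.injEq] at heq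
    obtain ⟨hv, hr, hs, hl⟩ := heq
    rw [chooseS x1, chooseS x2] at hr
    rw [chooseS y1, chooseS y2] at hs
    simp only [Prod.mk.injEq]
    omega
  · -- SurjOn
    rintro ⟨v, r, s, l⟩ hq
    simp only [paramSet, Set.mem_setOf_eq] at hq
    obtain ⟨h1, h2, h3, h4⟩ := hq
    have hls : l ≤ s := by omega
    have hlr : l ≤ r := le_trans hls h4
    have hv1 : 1 ≤ v := by omega
    have H1 : (l : ℤ) * ((v : ℤ) - 1) = (r : ℤ) * ((r : ℤ) - 1) + (s : ℤ) * ((s : ℤ) - 1) := by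
      have := congrArg (Nat.cast : ℕ → ℤ) h1
      rw [Nat.cast_add, cast_mul_pred, cast_mul_pred, Nat.cast_mul,
        Nat.cast_sub hv1, Nat.cast_one] at this
      exact this
    have H2 : (v : ℤ) + 2 * l = 2 * ((r : ℤ) + s) + 1 := by exact_mod_cast h2
    have K : ((r : ℤ) - l) ^ 2 + ((s : ℤ) - l) ^ 2 = (r : ℤ) + s := by
      linear_combination -H1 + (l : ℤ) * H2
    have e1 : ((r - l : ℕ) : ℤ) = (r : ℤ) - l := by push_cast [Nat.cast_sub hlr]; ring
    have e2 : ((s - l : ℕ) : ℤ) = (s : ℤ) - l := by push_cast [Nat.cast_sub hls]; ring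
    have HA : 2 * (((r - l).choose 2 : ℤ)) = ((r : ℤ) - l) * (((r : ℤ) - l) - 1) := by
      have := c2 (r - l); rwa [e1] at this
    have HB : 2 * (((s - l).choose 2 : ℤ)) = ((s : ℤ) - l) * (((s : ℤ) - l) - 1) := by
      have := c2 (s - l); rwa [e2] at this
    refine ⟨(r - l, s - l), ?_, ?_⟩
    · simp only [pairSet, Set.mem_setOf_eq]; omega
    · simp only [paramMap, Prod.mk.injEq]
      rw [chooseS (r - l), chooseS (s - l)]
      refine ⟨?_, ?_, ?_, ?_⟩
      · apply natCast_inj'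
        push_cast [e1, e2]
        linear_combination K - H2
      · apply natCast_inj'
        have : 2 * ((((r - l : ℕ)) : ℤ) + ((r - l).choose 2 : ℤ) + ((s - l).choose 2 : ℤ)) =
            2 * (r : ℤ) := by
          rw [e1]; linear_combination HA + HB + K
        push_cast at this ⊢
        linarith
      · apply natCast_inj'
        have : 2 * (((r - l).choose 2 : ℤ) + ((((s - l : ℕ)) : ℤ) + ((s - l).choose 2 : ℤ))) =
            2 * (s : ℤ) := by
          rw [e2]; linear_combination HA + HB + K
        push_cast at this ⊢
        linarith
      · apply natCast_inj'
        have : 2 * (((r - l).choose 2 : ℤ) + ((s - l).choose 2 : ℤ)) = 2 * (l : ℤ) := by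
          linear_combination HA + HB + K
        push_cast at this ⊢
        linarith
end

section
/- Let A = [a_0, a_1, …, a_{v−1}] be a complex sequence of length v = md, where m, d > 1 are integers, and let A^{(d)} be the m-compression of A. Then PSD_A(ms) = PSD_{A^{(d)}}(s) for all s = 0, 1, …, d−1, where PSD_A is computed with ω = exp(2πi/v) and PSD_{A^{(d)}} with ω_0 = exp(2πi/d). -/
open Complex Finset

/-- Discrete Fourier transform of a sequence of length `v`:
`DFT_A(s) = ∑_{j<v} a_j ω^{js}` with `ω = exp(2πi/v)`. -/
noncomputable def dft (v : ℕ) (a : ℕ → ℂ) (s : ℕ) : ℂ :=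
  ∑ j ∈ Finset.range v, a j * Complex.exp (2 * Real.pi * Complex.I * j * s / v)

/-- Power spectral density: `PSD_A(s) = |DFT_A(s)|²`. -/
noncomputable def psd (v : ℕ) (a : ℕ → ℂ) (s : ℕ) : ℝ :=
  ‖dft v a s‖ ^ 2

/-- The `m`-compression of a sequence of length `v = d·m`:
`a_j^{(d)} = a_j + a_{j+d} + … + a_{j+(m−1)d}`. -/
noncomputable def compress (d m : ℕ) (a : ℕ → ℂ) (j : ℕ) : ℂ :=
  ∑ l ∈ Finset.range m, a (j + l * d)

/-!
Writing `j = r + l d` with `r < d`, `l < m`, the twiddle factor at frequency `m s` is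
`exp (2πi (r + l d) m s / (m d)) = exp (2πi r s / d) · exp (2πi l s) = exp (2πi r s / d)`,
so it depends on `j` only through `r`. Grouping the DFT sum by `r` therefore gives
`DFT_A(m s) = DFT_{A^{(d)}}(s)` already before taking absolute values.
-/

theorem Finset.sum_range_mul_eq_sum_sum {M : Type*} [AddCommMonoid M] (m d : ℕ) (f : ℕ → M) :
    ∑ j ∈ range (m * d), f j = ∑ r ∈ range d, ∑ l ∈ range m, f (r + l * d) := by
  rw [Finset.sum_comm]
  induction m with
  | zero => simp
  | succ m ih =>
    rw [Nat.succ_mul, sum_range_add, ih, sum_range_succ]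
    simp only [add_comm]

lemma exp_dft_kernel_mul_freq {m d : ℕ} (hm : m ≠ 0) (hd : d ≠ 0) (r l s : ℕ) :
    exp (2 * Real.pi * I * ↑(r + l * d) * ↑(m * s) / ↑(m * d)) =
      exp (2 * Real.pi * I * r * s / d) := by
  have hexponent : 2 * Real.pi * I * ↑(r + l * d) * ↑(m * s) / ↑(m * d) =
      2 * Real.pi * I * r * s / d + ↑(l * s) * (2 * Real.pi * I) := by
    push_cast
    field_simp
  rw [hexponent, exp_periodic.nat_mul (l * s)]

theorem dft_mul_freq (m d : ℕ) (a : ℕ → ℂ) (s : ℕ) :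
    dft (m * d) a (m * s) = dft d (compress d m a) s := by
  rcases eq_or_ne m 0 with rfl | hm
  · simp [dft, compress]
  rcases eq_or_ne d 0 with rfl | hd
  · simp [dft]
  rw [dft, dft, Finset.sum_range_mul_eq_sum_sum]
  refine sum_congr rfl fun r _ => ?_
  rw [compress, sum_mul]
  exact sum_congr rfl fun l _ => by rw [exp_dft_kernel_mul_freq hm hd]

theorem psd_compress_general (v m d : ℕ) (hv : v = m * d)
    (a : ℕ → ℂ) (s : ℕ) :
    psd v a (m * s) = psd d (compress d m a) s := by
  rw [psd, psd, hv, dft_mul_freq]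

theorem psd_compress (v m d : ℕ) (hm : 1 < m) (hd : 1 < d) (hv : v = m * d)
    (a : ℕ → ℂ) (s : ℕ) (hs : s < d) :
    psd v a (m * s) = psd d (compress d m a) s :=
  psd_compress_general v m d hv a s
end

section
/- Let A = [a_0, a_1, …, a_{v−1}] be a complex sequence of length v = md, where m, d > 1 are integers, and let A^{(d)} be its m-compression. Then for every s = 0, 1, …, d−1, PAF_{A^{(d)}}(s) = ∑_{l=0}^{m−1} PAF_A(s + ld), where on the left indices are taken modulo d and on the right modulo v. -/
open Complex Finset

/-- Periodic autocorrelation function of a sequence of length `v`: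
`PAF_A(s) = ∑_{k<v} a_{(k+s) mod v} · conj(a_k)`. -/
noncomputable def paf (v : ℕ) (a : ℕ → ℂ) (s : ℕ) : ℂ :=
  ∑ k ∈ Finset.range v, a ((k + s) % v) * (starRingEnd ℂ) (a k)

/-! For a fixed index `t < v`, the residues `(t + s + l·d) mod v`, `l < m`, run once through the
indices below `v` congruent to `t + s` mod `d`, so summing `PAF_A(s + l·d)` over `l` collects
`A^{(d)}_{(t+s) mod d} · conj(a_t)` for every `t`. Writing `t = k + j·d` and summing over `j`
turns `conj(a_t)` into `conj(A^{(d)}_k)`, which is `PAF_{A^{(d)}}(s)`. -/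

theorem sum_range_mul_eq_sum_sum_add_mul {M : Type*} [AddCommMonoid M] (m d : ℕ) (f : ℕ → M) :
    ∑ t ∈ range (m * d), f t = ∑ k ∈ range d, ∑ j ∈ range m, f (k + j * d) := by
  induction m with
  | zero => simp
  | succ m ih =>
    rw [Nat.succ_mul, sum_range_add, ih, ← sum_add_distrib]
    refine sum_congr rfl fun k _ ↦ ?_
    rw [sum_range_succ, add_comm (m * d) k]

theorem sum_range_comp_succ_of_eq {M : Type*} [AddCommMonoid M] {g : ℕ → M} {m : ℕ}
    (hg : g m = g 0) : ∑ l ∈ range m, g (l + 1) = ∑ l ∈ range m, g l := by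
  cases m with
  | zero => simp
  | succ n => rw [sum_range_succ, hg, ← sum_range_succ']

theorem periodic_sum_range_add_mul_mod_mul {M : Type*} [AddCommMonoid M] (m d : ℕ)
    (f : ℕ → M) :
    Function.Periodic (fun t ↦ ∑ l ∈ range m, f ((t + l * d) % (m * d))) d := by
  intro t
  have h := sum_range_comp_succ_of_eq (g := fun l ↦ f ((t + l * d) % (m * d))) (m := m)
    (by simp)
  simpa only [add_mul, one_mul, add_assoc, add_comm d] using h

theorem compress_mod_eq_sum_mod (m d : ℕ) (a : ℕ → ℂ) (t : ℕ) :
    compress d m a (t % d) = ∑ l ∈ range m, a ((t + l * d) % (m * d)) := by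
  rw [← (periodic_sum_range_add_mul_mod_mul m d a).map_mod_nat t]
  rcases d.eq_zero_or_pos with rfl | hd
  · simp [compress]
  refine sum_congr rfl fun l hl ↦ congrArg a (Nat.mod_eq_of_lt ?_).symm
  have := Nat.mod_lt t hd
  have : l + 1 ≤ m := mem_range.mp hl
  nlinarith

theorem paf_compress_general (v m d : ℕ) (hv : v = m * d)
    (a : ℕ → ℂ) (s : ℕ) :
    paf d (compress d m a) s = ∑ l ∈ Finset.range m, paf v a (s + l * d) := by
  subst hv
  calc paf d (compress d m a) s
      = ∑ k ∈ range d, ∑ j ∈ range m,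
          compress d m a ((k + j * d + s) % d) * starRingEnd ℂ (a (k + j * d)) := by
        refine sum_congr rfl fun k _ ↦ ?_
        simp only [compress, map_sum, mul_sum, add_right_comm k, Nat.add_mul_mod_self_right]
    _ = ∑ t ∈ range (m * d), compress d m a ((t + s) % d) * starRingEnd ℂ (a t) :=
        (sum_range_mul_eq_sum_sum_add_mul m d fun t ↦
          compress d m a ((t + s) % d) * starRingEnd ℂ (a t)).symm
    _ = ∑ l ∈ range m, paf (m * d) a (s + l * d) := by
        unfold paf
        rw [sum_comm]
        refine sum_congr rfl fun t _ ↦ ?_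
        rw [compress_mod_eq_sum_mod, sum_mul]
        simp only [add_assoc]

theorem paf_compress (v m d : ℕ) (hm : 1 < m) (hd : 1 < d) (hv : v = m * d)
    (a : ℕ → ℂ) (s : ℕ) (hs : s < d) :
    paf d (compress d m a) s = ∑ l ∈ Finset.range m, paf v a (s + l * d) :=
  paf_compress_general v m d hv a s
end

section
/- Let A_1, …, A_t be complex sequences of length v = md, where m, d > 1 are integers, such that ∑_{i=1}^t PAF_{A_i}(s) = α for some constant α and all s with 1 ≤ s ≤ v−1. Then the m-compressions satisfy ∑_{i=1}^t PAF_{A_i^{(d)}}(s) = mα for all s with 1 ≤ s ≤ d−1. -/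
open Complex Finset

/-- Summing `f ((q + r) % m)` over `r < m` is the same as summing `f r`. -/
lemma sum_shift_mod (m : ℕ) (hm : 0 < m) (q : ℕ) (f : ℕ → ℂ) :
    ∑ r ∈ Finset.range m, f ((q + r) % m) = ∑ r ∈ Finset.range m, f r := by
  have hinj : Set.InjOn (fun r => (q + r) % m) (Finset.range m) := by
    intro r hr r' hr' h
    simp only [Finset.coe_range, Set.mem_Iio] at hr hr'
    have : r ≡ r' [MOD m] := Nat.ModEq.add_left_cancel' q h
    have : r % m = r' % m := this
    rwa [Nat.mod_eq_of_lt hr, Nat.mod_eq_of_lt hr'] at this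
  have himg : (Finset.range m).image (fun r => (q + r) % m) = Finset.range m := by
    apply Finset.eq_of_subset_of_card_le
    · intro x hx
      simp only [Finset.mem_image] at hx
      obtain ⟨r, _, rfl⟩ := hx
      exact Finset.mem_range.mpr (Nat.mod_lt _ hm)
    · rw [Finset.card_image_of_injOn hinj]
  calc ∑ r ∈ Finset.range m, f ((q + r) % m)
      = ∑ x ∈ (Finset.range m).image (fun r => (q + r) % m), f x :=
        (Finset.sum_image fun x hx y hy h => hinj hx hy h).symm
    _ = ∑ x ∈ Finset.range m, f x := by rw [himg]

/-- Key arithmetic identity: summing `a ((n + r*d) % (m*d))` over `r < m`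
gives the compression evaluated at `n % d`. -/
lemma sum_mod_mul (m d : ℕ) (hm : 0 < m) (hd : 0 < d) (a : ℕ → ℂ) (n : ℕ) :
    ∑ r ∈ Finset.range m, a ((n + r * d) % (m * d)) = compress d m a (n % d) := by
  have hmod : ∀ r : ℕ, (n + r * d) % (m * d) = n % d + ((n / d + r) % m) * d := by
    intro r
    set q := n / d + r with hq
    have h1 : n + r * d = n % d + q * d := by
      have := Nat.mod_add_div' n d
      calc n + r * d = (n % d + n / d * d) + r * d := by rw [this]
        _ = n % d + q * d := by rw [hq]; ring
    have h2 : n % d + q * d = (n % d + (q % m) * d) + (q / m) * (m * d) := by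
      have := Nat.mod_add_div' q m
      calc n % d + q * d = n % d + (q % m + q / m * m) * d := by rw [this]
        _ = (n % d + (q % m) * d) + (q / m) * (m * d) := by ring
    have h3 : n % d + (q % m) * d < m * d := by
      have hlt1 : n % d < d := Nat.mod_lt _ hd
      have hlt2 : q % m < m := Nat.mod_lt _ hm
      calc n % d + (q % m) * d < d + (q % m) * d := Nat.add_lt_add_right hlt1 _
        _ = (q % m + 1) * d := by ring
        _ ≤ m * d := Nat.mul_le_mul_right d (by omega)
    rw [h1, h2, Nat.add_mul_mod_self_right, Nat.mod_eq_of_lt h3]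
  calc ∑ r ∈ Finset.range m, a ((n + r * d) % (m * d))
      = ∑ r ∈ Finset.range m, a (n % d + ((n / d + r) % m) * d) := by
        exact Finset.sum_congr rfl fun r _ => by rw [hmod r]
    _ = ∑ l ∈ Finset.range m, a (n % d + l * d) :=
        sum_shift_mod m hm (n / d) (fun l => a (n % d + l * d))
    _ = compress d m a (n % d) := rfl

/-- The PAF of the compression is the sum of the PAFs of the original sequence. -/
lemma paf_compress_eq (m d : ℕ) (hm : 0 < m) (hd : 0 < d) (a : ℕ → ℂ) (s : ℕ) :
    paf d (compress d m a) s = ∑ r ∈ Finset.range m, paf (m * d) a (s + r * d) := by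
  have RHS : ∑ r ∈ Finset.range m, paf (m * d) a (s + r * d)
      = ∑ k ∈ Finset.range (m * d), compress d m a ((k + s) % d) * (starRingEnd ℂ) (a k) := by
    unfold paf
    rw [Finset.sum_comm]
    refine Finset.sum_congr rfl fun k _ => ?_
    rw [← Finset.sum_mul]
    congr 1
    have : ∀ r : ℕ, k + (s + r * d) = (k + s) + r * d := fun r => by ring
    calc ∑ r ∈ Finset.range m, a ((k + (s + r * d)) % (m * d))
        = ∑ r ∈ Finset.range m, a (((k + s) + r * d) % (m * d)) :=
          Finset.sum_congr rfl fun r _ => by rw [this r]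
      _ = compress d m a ((k + s) % d) := sum_mod_mul m d hm hd a (k + s)
  rw [RHS]
  have LHS : paf d (compress d m a) s
      = ∑ p ∈ Finset.range d ×ˢ Finset.range m,
          compress d m a ((p.1 + s) % d) * (starRingEnd ℂ) (a (p.1 + p.2 * d)) := by
    rw [Finset.sum_product]
    unfold paf
    refine Finset.sum_congr rfl fun j _ => ?_
    have : (starRingEnd ℂ) (compress d m a j)
        = ∑ l ∈ Finset.range m, (starRingEnd ℂ) (a (j + l * d)) := by
      rw [compress, map_sum]
    rw [this, Finset.mul_sum]
  rw [LHS]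
  apply Finset.sum_nbij' (i := fun p : ℕ × ℕ => p.1 + p.2 * d) (j := fun k => (k % d, k / d))
  · rintro ⟨j, l⟩ hp
    simp only [Finset.mem_product, Finset.mem_range] at hp ⊢
    calc j + l * d < d + l * d := Nat.add_lt_add_right hp.1 _
      _ = (l + 1) * d := by ring
      _ ≤ m * d := Nat.mul_le_mul_right d (by omega)
  · intro k hk
    simp only [Finset.mem_range] at hk
    simp only [Finset.mem_product, Finset.mem_range]
    exact ⟨Nat.mod_lt _ hd, (Nat.div_lt_iff_lt_mul hd).mpr hk⟩
  · rintro ⟨j, l⟩ hp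
    simp only [Finset.mem_product, Finset.mem_range] at hp
    have h1 : (j + l * d) % d = j := by
      rw [Nat.add_mul_mod_self_right, Nat.mod_eq_of_lt hp.1]
    have h2 : (j + l * d) / d = l := by
      rw [Nat.add_mul_div_right _ _ hd, Nat.div_eq_of_lt hp.1, Nat.zero_add]
    simp only [Prod.mk.injEq]
    exact ⟨h1, h2⟩
  · intro k _
    simp [Nat.mod_add_div' k d]
  · rintro ⟨j, l⟩ hp
    simp only
    have h1 : (j + l * d + s) % d = (j + s) % d := by
      have h : j + l * d + s = (j + s) + l * d := by ring
      rw [h, Nat.add_mul_mod_self_right]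
    rw [h1]

theorem paf_sum_compress (v m d : ℕ) (hm : 1 < m) (hd : 1 < d) (hv : v = m * d)
    (t : ℕ) (A : Fin t → ℕ → ℂ) (α : ℂ)
    (hcomp : ∀ s : ℕ, 1 ≤ s → s ≤ v - 1 → ∑ i, paf v (A i) s = α) :
    ∀ s : ℕ, 1 ≤ s → s ≤ d - 1 →
      ∑ i, paf d (compress d m (A i)) s = (m : ℂ) * α := by
  intro s hs1 hs2
  subst hv
  have hm0 : 0 < m := by omega
  have hd0 : 0 < d := by omega
  calc ∑ i, paf d (compress d m (A i)) s
      = ∑ i, ∑ r ∈ Finset.range m, paf (m * d) (A i) (s + r * d) :=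
        Finset.sum_congr rfl fun i _ => paf_compress_eq m d hm0 hd0 (A i) s
    _ = ∑ r ∈ Finset.range m, ∑ i, paf (m * d) (A i) (s + r * d) := Finset.sum_comm
    _ = ∑ _r ∈ Finset.range m, α := by
        refine Finset.sum_congr rfl fun r hr => ?_
        apply hcomp
        · omega
        · have hr' : r + 1 ≤ m := Finset.mem_range.mp hr
          have h4 : r * d + d ≤ m * d := by
            calc r * d + d = (r + 1) * d := by ring
              _ ≤ m * d := Nat.mul_le_mul_right d hr'
          generalize r * d = x at h4 ⊢
          generalize m * d = y at h4 ⊢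
          omega
    _ = (m : ℂ) * α := by
        rw [Finset.sum_const, Finset.card_range, nsmul_eq_mul]
end

section
/- Let (X, Y) be supplementary difference sets over Z_v with parameters (v; r, s; λ) such that v = 2n + 1 where n = r + s − λ. Then the associated circulant matrices satisfy C_X C_X^T + C_Y C_Y^T = (2v − 2)·I_v + 2·J_v, where I_v is the identity matrix of order v and J_v is the v×v matrix with all entries equal to 1. -/
open Finset Matrix

/-- The number of ordered pairs `(a, b)` with `a, b ∈ X` and `a − b = c` in `ZMod v`. -/
def diffCount (v : ℕ) (X : Finset (ZMod v)) (c : ZMod v) : ℕ :=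
  ((X ×ˢ X).filter (fun p => p.1 - p.2 = c)).card

/-- The circulant ±1 matrix associated to `X ⊆ ZMod v`: its `(j,k)` entry is
`−1` if `k − j ∈ X` and `+1` otherwise. -/
def circ (v : ℕ) (X : Finset (ZMod v)) : Matrix (ZMod v) (ZMod v) ℤ :=
  fun j k => if k - j ∈ X then -1 else 1

/-! Writing the ±1 sequence of `X` as `1 - 2·1_X`, the `(j, k)` entry of `C_X C_Xᵀ` is
`v - 4|X| + 4·d_X(k - j)`, where `d_X` counts differences. Adding the entries for `X` and `Y`,
the diagonal gives `2v` since `d_X(0) = |X|`, and off the diagonal the SDS condition together with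
`v = 2(r + s - λ) + 1` gives `2v - 4(r + s) + 4λ = 2`. -/

theorem card_filter_sub_mem {G : Type*} [AddGroup G] [Fintype G] [DecidableEq G] (X : Finset G)
    (t : G) : #{i | i - t ∈ X} = #X := by
  refine card_nbij' (· - t) (· + t) ?_ ?_ ?_ ?_ <;> intro i <;> simp

section

variable {v : ℕ} (X : Finset (ZMod v))

theorem diffCount_zero : diffCount v X 0 = #X := by
  unfold diffCount
  refine card_nbij' Prod.fst (fun a => (a, a)) ?_ ?_ ?_ ?_ <;>
    intro p <;> simp +contextual [sub_eq_zero, Prod.ext_iff]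

variable [NeZero v]

theorem card_filter_sub_mem_and_sub_mem (j k : ZMod v) :
    #{i | i - j ∈ X ∧ i - k ∈ X} = diffCount v X (k - j) := by
  unfold diffCount
  refine card_nbij' (fun i => (i - j, i - k)) (fun p => p.1 + j) ?_ ?_ ?_ ?_
  · intro i hi
    simpa using hi
  · rintro ⟨a, b⟩ hab
    simp only [mem_coe, mem_filter, mem_product] at hab
    obtain rfl : b = a + j - k := by linear_combination -hab.2
    simpa using hab.1
  · intro i _
    simp
  · rintro ⟨a, b⟩ hab
    simp only [mem_coe, mem_filter, mem_product] at hab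
    obtain rfl : b = a + j - k := by linear_combination -hab.2
    simp

theorem circ_mul_transpose_apply (j k : ZMod v) :
    (circ v X * (circ v X)ᵀ) j k = v - 4 * #X + 4 * diffCount v X (k - j) := by
  have hexpand : ∀ i, circ v X j i * circ v X k i =
      1 - 2 * (if i - j ∈ X then 1 else 0) - 2 * (if i - k ∈ X then 1 else 0)
        + 4 * (if i - j ∈ X ∧ i - k ∈ X then 1 else 0) := by
    intro i
    unfold circ
    split_ifs <;> simp_all
  simp only [mul_apply, transpose_apply, hexpand, sum_add_distrib, sum_sub_distrib, ← mul_sum,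
    sum_boole, card_filter_sub_mem, card_filter_sub_mem_and_sub_mem]
  rw [sum_const, card_univ, ZMod.card, nsmul_one]
  ring

end

theorem doptimal_sds_matrix_identity (v : ℕ) [NeZero v] (r s lam : ℕ)
    (X Y : Finset (ZMod v))
    (hX : X.card = r) (hY : Y.card = s)
    (hsds : ∀ c : ZMod v, c ≠ 0 → diffCount v X c + diffCount v Y c = lam)
    (hv : v + 2 * lam = 2 * (r + s) + 1) :
    circ v X * (circ v X)ᵀ + circ v Y * (circ v Y)ᵀ =
      (2 * (v : ℤ) - 2) • (1 : Matrix (ZMod v) (ZMod v) ℤ) +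
      (2 : ℤ) • (Matrix.of fun _ _ => (1 : ℤ) : Matrix (ZMod v) (ZMod v) ℤ) := by
  have hv' : (v : ℤ) + 2 * lam = 2 * (r + s) + 1 := by exact_mod_cast hv
  subst hX hY
  ext j k
  simp only [Matrix.add_apply, circ_mul_transpose_apply, Matrix.smul_apply, one_apply,
    of_apply, smul_eq_mul]
  obtain rfl | hjk := eq_or_ne j k
  · simp only [sub_self, diffCount_zero, if_true]
    ring
  · have hsum : (diffCount v X (k - j) : ℤ) + diffCount v Y (k - j) = lam := by
      exact_mod_cast hsds (k - j) (sub_ne_zero.mpr hjk.symm)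
    rw [if_neg hjk]
    linear_combination 4 * hsum + 2 * hv'
end

section
/- The subsets X = {0,1,2,3,4,5,8,9,10,12,13,16,17,19,22,25,27,28,30,32,33,34,38,40,42,44,47,49,51,54,57,60,61,65,66,67} and Y = {0,1,2,4,5,6,7,9,10,12,16,17,21,24,25,30,31,32,35,38,39,41,43,45,51,52,61,63,64} of Z_75 form supplementary difference sets with parameters (75; 36, 29; 28); in particular, |X| = 36, |Y| = 29, and for every nonzero c ∈ Z_75 the total number of ordered pairs (a,b) with a,b in the same block and a − b ≡ c (mod 75) equals 28. -/
open Finset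

set_option maxRecDepth 100000 in
set_option maxHeartbeats 4000000 in
theorem sds_75_36_29_28
    (X Y : Finset (ZMod 75))
    (hX : X = ({0,1,2,3,4,5,8,9,10,12,13,16,17,19,22,25,27,28,30,32,33,34,38,40,42,44,47,49,51,54,57,60,61,65,66,67} : Finset (ZMod 75)))
    (hY : Y = ({0,1,2,4,5,6,7,9,10,12,16,17,21,24,25,30,31,32,35,38,39,41,43,45,51,52,61,63,64} : Finset (ZMod 75))) :
    X.card = 36 ∧ Y.card = 29 ∧
      ∀ c : ZMod 75, c ≠ 0 → diffCount 75 X c + diffCount 75 Y c = 28 := by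
  subst hX hY
  exact ⟨by decide, by decide, by decide⟩
end

section
/- The subsets X = {0,1,2,3,4,5,6,8,10,12,16,18,22,23,24,25,32,33,36,37,38,39,43,46,47,50,54,56,57,61,62,63,66,69,71,74,80,83} and Y = {0,1,2,5,6,8,10,11,13,17,18,19,21,23,24,26,27,29,33,36,38,40,43,45,48,49,51,52,53,54,58,65,66,69,77,78} of Z_87 form supplementary difference sets with parameters (87; 38, 36; 31); in particular, |X| = 38, |Y| = 36, and for every nonzero c ∈ Z_87 the total number of ordered pairs (a,b) with a,b in the same block and a − b ≡ c (mod 87) equals 31. -/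
set_option maxHeartbeats 4000000
set_option maxRecDepth 10000
open Finset

theorem sds_87_38_36_31
    (X Y : Finset (ZMod 87))
    (hX : X = ({0,1,2,3,4,5,6,8,10,12,16,18,22,23,24,25,32,33,36,37,38,39,43,46,47,50,54,56,57,61,62,63,66,69,71,74,80,83} : Finset (ZMod 87)))
    (hY : Y = ({0,1,2,5,6,8,10,11,13,17,18,19,21,23,24,26,27,29,33,36,38,40,43,45,48,49,51,52,53,54,58,65,66,69,77,78} : Finset (ZMod 87))) :
    X.card = 38 ∧ Y.card = 36 ∧
      ∀ c : ZMod 87, c ≠ 0 → diffCount 87 X c + diffCount 87 Y c = 31 := by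
  subst hX hY
  refine ⟨by decide, by decide, by decide⟩
end
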